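/- arXiv:math/0702717 — 4 statements merged into one kernel-verified Lean document; each statement's English description precedes it below -/
import Mathlib

section
/- The complement complex of a join of two simplicial complexes on disjoint vertex sets is the join of their complement complexes: c(K * L) = c(K) * c(L). -/
/-- `K` is a simplicial complex: closed under taking subsets. -/
def IsComplex {V : Type} [DecidableEq V] (K : Set (Finset V)) : Prop :=
  ∀ σ ∈ K, ∀ τ ⊆ σ, τ ∈ K

/-- `σ` is a facet (inclusion-maximal face) of `K`. -/
def IsFacet {V : Type} [DecidableEq V] (K : Set (Finset V)) (σ : Finset V) : Prop :=
  σ ∈ K ∧ ∀ τ ∈ K, σ ⊆ τ → σ = τ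

/-- The complement complex of `K` with respect to the ground set `A`. -/
def compCplx {V : Type} [DecidableEq V] (A : Finset V) (K : Set (Finset V)) :
    Set (Finset V) :=
  {σ | ∃ τ, IsFacet K τ ∧ σ ⊆ A \ τ}

/-- The join of two simplicial complexes (on disjoint vertex sets). -/
def joinCplx {V : Type} [DecidableEq V] (K L : Set (Finset V)) :
    Set (Finset V) :=
  {ρ | ∃ σ ∈ K, ∃ τ ∈ L, ρ = σ ∪ τ}

lemma exists_facet {V : Type} [DecidableEq V] (A : Finset V) (K : Set (Finset V))
    (hKA : ∀ σ ∈ K, σ ⊆ A) (σ : Finset V) (hσ : σ ∈ K) :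
    ∃ τ, IsFacet K τ ∧ σ ⊆ τ := by
  by_cases h : ∀ τ ∈ K, σ ⊆ τ → σ = τ
  · exact ⟨σ, ⟨hσ, h⟩, subset_rfl⟩
  · push_neg at h
    obtain ⟨τ, hτ, hst, hne⟩ := h
    have h1 : σ.card < τ.card :=
      Finset.card_lt_card (Finset.ssubset_iff_subset_ne.mpr ⟨hst, hne⟩)
    have h2 : τ.card ≤ A.card := Finset.card_le_card (hKA τ hτ)
    obtain ⟨ρ, hρ, hsub⟩ := exists_facet A K hKA τ hτ
    exact ⟨ρ, hρ, hst.trans hsub⟩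
termination_by A.card - σ.card
decreasing_by omega

/-- The complement complex of a join of two simplicial complexes on disjoint
vertex sets `A` and `B` is the join of their complement complexes:
`c(K * L) = c(K) * c(L)`. -/
theorem compCplx_join {V : Type} [DecidableEq V] (A B : Finset V)
    (hAB : Disjoint A B) (K L : Set (Finset V))
    (hK : IsComplex K) (hL : IsComplex L)
    (hKA : ∀ σ ∈ K, σ ⊆ A) (hLB : ∀ τ ∈ L, τ ⊆ B) :
    compCplx (A ∪ B) (joinCplx K L) =
      joinCplx (compCplx A K) (compCplx B L) := by
  ext σ
  constructor
  · rintro ⟨ρ, ⟨⟨σK, hσK, σL, hσL, rfl⟩, hmax⟩, hsub⟩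
    have hKAs := hKA σK hσK
    have hLBs := hLB σL hσL
    -- σK is a facet of K
    have hfK : IsFacet K σK := by
      refine ⟨hσK, fun τ hτ hsubτ => ?_⟩
      have hρ : σK ∪ σL = τ ∪ σL :=
        hmax (τ ∪ σL) ⟨τ, hτ, σL, hσL, rfl⟩ (Finset.union_subset_union_left hsubτ)
      apply Finset.Subset.antisymm hsubτ
      intro x hx
      have hxA : x ∈ A := hKA τ hτ hx
      have : x ∈ σK ∪ σL := hρ ▸ Finset.mem_union_left _ hx
      rcases Finset.mem_union.mp this with h | h
      · exact h
      · exact absurd (hLBs h) (Finset.disjoint_left.mp hAB hxA)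
    have hfL : IsFacet L σL := by
      refine ⟨hσL, fun τ hτ hsubτ => ?_⟩
      have hρ : σK ∪ σL = σK ∪ τ :=
        hmax (σK ∪ τ) ⟨σK, hσK, τ, hτ, rfl⟩ (Finset.union_subset_union_right hsubτ)
      apply Finset.Subset.antisymm hsubτ
      intro x hx
      have hxB : x ∈ B := hLB τ hτ hx
      have : x ∈ σK ∪ σL := hρ ▸ Finset.mem_union_right _ hx
      rcases Finset.mem_union.mp this with h | h
      · exact absurd hxB (Finset.disjoint_left.mp hAB (hKAs h))
      · exact h
    refine ⟨σ ∩ A, ⟨σK, hfK, ?_⟩, σ ∩ B, ⟨σL, hfL, ?_⟩, ?_⟩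
    · intro x hx
      rcases Finset.mem_inter.mp hx with ⟨hxσ, hxA⟩
      have := Finset.mem_sdiff.mp (hsub hxσ)
      simp only [Finset.mem_union, not_or] at this
      exact Finset.mem_sdiff.mpr ⟨hxA, this.2.1⟩
    · intro x hx
      rcases Finset.mem_inter.mp hx with ⟨hxσ, hxB⟩
      have := Finset.mem_sdiff.mp (hsub hxσ)
      simp only [Finset.mem_union, not_or] at this
      exact Finset.mem_sdiff.mpr ⟨hxB, this.2.2⟩
    · ext x
      simp only [Finset.mem_union, Finset.mem_inter]
      constructor
      · intro hx
        have := Finset.mem_sdiff.mp (hsub hx)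
        rcases Finset.mem_union.mp this.1 with h | h
        · exact Or.inl ⟨hx, h⟩
        · exact Or.inr ⟨hx, h⟩
      · rintro (⟨h, _⟩ | ⟨h, _⟩) <;> exact h
  · rintro ⟨σ₁, ⟨τK, hfK, h1⟩, σ₂, ⟨τL, hfL, h2⟩, rfl⟩
    have hτKA := hKA τK hfK.1
    have hτLB := hLB τL hfL.1
    refine ⟨τK ∪ τL, ⟨⟨τK, hfK.1, τL, hfL.1, rfl⟩, ?_⟩, ?_⟩
    · rintro ρ ⟨ρK, hρK, ρL, hρL, rfl⟩ hsub
      have hsubK : τK ⊆ ρK := by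
        intro x hx
        have hxA : x ∈ A := hτKA hx
        rcases Finset.mem_union.mp (hsub (Finset.mem_union_left _ hx)) with h | h
        · exact h
        · exact absurd hxA (Finset.disjoint_right.mp hAB (hLB ρL hρL h))
      have hsubL : τL ⊆ ρL := by
        intro x hx
        have hxB : x ∈ B := hτLB hx
        rcases Finset.mem_union.mp (hsub (Finset.mem_union_right _ hx)) with h | h
        · exact absurd hxB (Finset.disjoint_left.mp hAB (hKA ρK hρK h))
        · exact h
      rw [hfK.2 ρK hρK hsubK, hfL.2 ρL hρL hsubL]
    · intro x hx
      rcases Finset.mem_union.mp hx with h | h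
      · have := Finset.mem_sdiff.mp (h1 h)
        refine Finset.mem_sdiff.mpr ⟨Finset.mem_union_left _ this.1, ?_⟩
        simp only [Finset.mem_union, not_or]
        exact ⟨this.2, fun hc => Finset.disjoint_left.mp hAB this.1 (hτLB hc)⟩
      · have := Finset.mem_sdiff.mp (h2 h)
        refine Finset.mem_sdiff.mpr ⟨Finset.mem_union_right _ this.1, ?_⟩
        simp only [Finset.mem_union, not_or]
        exact ⟨fun hc => Finset.disjoint_right.mp hAB this.1 (hτKA hc), this.2⟩
end

section
/- The chromatic number of the Kneser graph KG_{n,2} (vertices are 2-element subsets of [n], edges between disjoint pairs) equals n − 2 for all n ≥ 3. -/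
/-- The Kneser graph `KG_{n,k}`: vertices are the `k`-element subsets of
`{1, …, n}`, two of them adjacent iff they are disjoint. -/
def kneserGraph (n k : ℕ) : SimpleGraph {s : Finset (Fin n) // s.card = k} where
  Adj s t := s ≠ t ∧ Disjoint s.1 t.1
  symm := by
    constructor
    rintro s t ⟨h1, h2⟩
    exact ⟨h1.symm, h2.symm⟩
  loopless := by
    constructor
    rintro s ⟨h, _⟩
    exact h rfl

/-! Colour a `k`-set by its least element, capped at `n + 1 - 2k`: sets with the capped colour
lie among the top `2k - 1` points, so no two of them are disjoint. This uses `n + 2 - 2k` colours.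

For `k = 2`, each colour class of a proper colouring is an intersecting family of pairs, hence
a star or of size at most `3`. Removing a star class together with its centre lowers both the
number of points and the number of colours by one; once no star is left, `k` classes cover at
most `3k` pairs, fewer than the `(k + 3).choose 2` pairs of a `(k + 3)`-set. -/

open Finset

section

variable {α : Type*} [DecidableEq α]

theorem Set.Intersecting.exists_forall_mem_of_card_eq_two {𝒜 : Finset (Finset α)}
    (h𝒜 : (𝒜 : Set (Finset α)).Intersecting) (h2 : ∀ s ∈ 𝒜, #s = 2) (h3 : 3 < #𝒜) :
    ∃ x, ∀ s ∈ 𝒜, x ∈ s := by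
  by_contra! hstar
  obtain ⟨A, hA⟩ : 𝒜.Nonempty := card_pos.1 (by omega)
  obtain ⟨x, y, hxy, rfl⟩ := card_eq_two.1 (h2 A hA)
  obtain ⟨B, hB, hxB⟩ := hstar x
  obtain ⟨C, hC, hyC⟩ := hstar y
  have hsub : 𝒜 ⊆ ({x, y} ∪ B).powersetCard 2 := by
    refine fun D hD ↦ mem_powersetCard.2 ⟨?_, h2 D hD⟩
    have := h𝒜 hA hD
    have := h𝒜 hB hD
    have := h𝒜 hC hD
    have := h𝒜 hA hC
    have := h𝒜 hB hC
    obtain ⟨b, b', -, rfl⟩ := card_eq_two.1 (h2 B hB)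
    obtain ⟨c, c', -, rfl⟩ := card_eq_two.1 (h2 C hC)
    obtain ⟨d, d', -, rfl⟩ := card_eq_two.1 (h2 D hD)
    simp only [Finset.not_disjoint_iff, Finset.mem_insert, Finset.mem_singleton,
      Finset.insert_subset_iff, Finset.singleton_subset_iff, Finset.mem_union] at *
    -- `x ∉ B` forces `y ∈ B`, and `C ∌ y` meets `A` and `B`, so `C ⊆ A ∪ B`;
    -- a pair meeting `A`, `B` and `C` then lies in `A ∪ B` as well.
    grind
  have hU : #({x, y} ∪ B) ≤ 3 := by
    have := card_union_add_card_inter {x, y} B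
    have := Finset.card_pos.2 (Finset.not_disjoint_iff_nonempty_inter.1 (h𝒜 hA hB))
    rw [card_pair hxy, h2 B hB] at *
    omega
  have : #𝒜 ≤ 3 := calc
    #𝒜 ≤ #(({x, y} ∪ B).powersetCard 2) := Finset.card_le_card hsub
    _ = (#({x, y} ∪ B)).choose 2 := card_powersetCard _ _
    _ ≤ Nat.choose 3 2 := Nat.choose_le_choose 2 hU
    _ = 3 := rfl
  omega

theorem Nat.le_add_two_of_choose_two_le {m k : ℕ} (h : m.choose 2 ≤ k * 3) : m ≤ k + 2 := by
  by_contra! hm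
  have hk : k * 3 + 1 ≤ (k + 3).choose 2 := by
    rw [Nat.choose_two_right, Nat.le_div_iff_mul_le two_pos, show k + 3 - 1 = k + 2 by omega]
    nlinarith [Nat.le_mul_self k]
  have := Nat.choose_le_choose 2 (show k + 3 ≤ m by omega)
  omega

theorem card_le_card_add_two_of_powersetCard_two_subset_biUnion {ι : Type*} [DecidableEq ι]
    {𝒞 : ι → Finset (Finset α)} (h𝒞 : ∀ i, (𝒞 i : Set (Finset α)).Intersecting)
    (h2 : ∀ i, ∀ s ∈ 𝒞 i, #s = 2) {I : Finset ι} {U : Finset α}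
    (hU : U.powersetCard 2 ⊆ I.biUnion 𝒞) : #U ≤ #I + 2 := by
  induction I using Finset.strongInduction generalizing U with | H I ih =>
  by_cases hstar : ∃ i ∈ I, 3 < #(𝒞 i)
  · obtain ⟨i, hi, hi3⟩ := hstar
    obtain ⟨x, hx⟩ := (h𝒞 i).exists_forall_mem_of_card_eq_two (h2 i) hi3
    have hcover : (U.erase x).powersetCard 2 ⊆ (I.erase i).biUnion 𝒞 := by
      intro s hs
      obtain ⟨j, hj, hsj⟩ := mem_biUnion.1 (hU (powersetCard_mono (erase_subset x U) hs))
      have hxs : x ∉ s := fun h ↦ by simpa using (mem_powersetCard.1 hs).1 h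
      exact mem_biUnion.2 ⟨j, mem_erase.2 ⟨fun hji ↦ hxs (hx s (hji ▸ hsj)), hj⟩, hsj⟩
    have := ih _ (erase_ssubset hi) hcover
    have := pred_card_le_card_erase (s := U) (a := x)
    have := card_erase_of_mem hi
    have := card_pos.2 ⟨i, hi⟩
    omega
  · push Not at hstar
    refine Nat.le_add_two_of_choose_two_le ?_
    calc (#U).choose 2 = #(U.powersetCard 2) := (card_powersetCard 2 U).symm
      _ ≤ #(I.biUnion 𝒞) := card_le_card hU
      _ ≤ ∑ i ∈ I, #(𝒞 i) := card_biUnion_le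
      _ ≤ ∑ _i ∈ I, 3 := sum_le_sum hstar
      _ = #I * 3 := sum_const_nat fun _ _ ↦ rfl

end

open SimpleGraph

theorem kneserGraph_colorable {n k : ℕ} (hk : 0 < k) (hkn : 2 * k ≤ n + 1) :
    (kneserGraph n k).Colorable (n + 2 - 2 * k) := by
  have hne (v : {s : Finset (Fin n) // #s = k}) : v.1.Nonempty :=
    card_pos.1 (hk.trans_eq v.2.symm)
  set m := n + 1 - 2 * k
  refine (colorable_iff_exists_bdd_nat_coloring _).2
    ⟨Coloring.mk (fun v ↦ min (v.1.min' (hne v) : ℕ) m) ?_,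
      fun v ↦ (min_le_right _ m).trans_lt (by omega)⟩
  rintro v w ⟨-, hvw⟩ hc
  by_cases hlow : (v.1.min' (hne v) : ℕ) < m ∨ (w.1.min' (hne w) : ℕ) < m
  · have : v.1.min' (hne v) = w.1.min' (hne w) := Fin.ext (by omega)
    have hmem := min'_mem w.1 (hne w)
    rw [← this] at hmem
    exact disjoint_left.1 hvw (min'_mem _ _) hmem
  · have hmn : m < n := by omega
    have hsub (u : {s : Finset (Fin n) // #s = k}) (hu : m ≤ (u.1.min' (hne u) : ℕ)) :
        u.1 ⊆ Ici ⟨m, hmn⟩ := fun a ha ↦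
      mem_Ici.2 (Fin.le_def.2 (hu.trans (Fin.le_def.1 (min'_le _ _ ha))))
    have := card_le_card (union_subset (hsub v (by omega)) (hsub w (by omega)))
    rw [card_union_of_disjoint hvw, v.2, w.2, Fin.card_Ici, Fin.val_mk] at this
    omega

theorem le_add_two_of_colorable_kneserGraph_two {n k : ℕ} (h : (kneserGraph n 2).Colorable k) :
    n ≤ k + 2 := by
  obtain ⟨C⟩ := h
  let 𝒞 (i : Fin k) : Finset (Finset (Fin n)) := (univ.filter (C · = i)).map (.subtype _)
  have h𝒞 (i : Fin k) : (𝒞 i : Set (Finset (Fin n))).Intersecting := by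
    rintro _ hs _ ht hdisj
    simp only [𝒞, coe_map, Set.mem_image, mem_coe, mem_filter_univ] at hs ht
    obtain ⟨v, hv, rfl⟩ := hs
    obtain ⟨w, hw, rfl⟩ := ht
    by_cases hvw : v = w
    · subst hvw
      simpa [v.2] using congrArg card (disjoint_self.1 hdisj)
    · exact C.valid ⟨hvw, hdisj⟩ (hv.trans hw.symm)
  have h2 (i : Fin k) : ∀ s ∈ 𝒞 i, #s = 2 := by
    simp only [𝒞, mem_map, Function.Embedding.subtype_apply]
    rintro _ ⟨v, -, rfl⟩
    exact v.2
  have hcover : (univ : Finset (Fin n)).powersetCard 2 ⊆ univ.biUnion 𝒞 := by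
    intro s hs
    have hs2 := (mem_powersetCard.1 hs).2
    exact mem_biUnion.2 ⟨C ⟨s, hs2⟩, mem_univ _, mem_map.2 ⟨⟨s, hs2⟩, by simp, rfl⟩⟩
  simpa using card_le_card_add_two_of_powersetCard_two_subset_biUnion h𝒞 h2 hcover

/-- The chromatic number of the Kneser graph `KG_{n,2}` is `n - 2` for
`n ≥ 3`. -/
theorem chromaticNumber_kneser_two (n : ℕ) (hn : 3 ≤ n) :
    (kneserGraph n 2).chromaticNumber = (n - 2 : ℕ) := by
  refine le_antisymm ?_ (le_chromaticNumber_iff_colorable.2 fun k hk ↦ ?_)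
  · exact (kneserGraph_colorable two_pos (by omega)).chromaticNumber_le
  · have := le_add_two_of_colorable_kneserGraph_two hk
    exact_mod_cast (by omega : n - 2 ≤ k)
end

section
/- Let K be the simplicial complex on vertex set [d+1] × [d] whose faces are the sets σ with |σ ∩ ([d+1] × {j})| ≤ 1 for each j (the d-fold join of d+1 isolated points). The minimal non-faces of K are exactly the pairs {(a, j), (b, j)} with a ≠ب b, and the Kneser graph of the minimal non-faces has chromatic number d(d − 1). -/
/-- The simplicial complex `K = L^{*d}` on the vertex set `[d+1] × [d]`,
the `d`-fold join of `d + 1` isolated points: a set `σ` is a face iff it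
contains at most one vertex from each part `[d+1] × {j}`. -/
def joinOfPoints (d : ℕ) : Set (Finset (Fin (d + 1) × Fin d)) :=
  {σ | ∀ j : Fin d, (σ.filter fun p => p.2 = j).card ≤ 1}

/-- Minimal non-faces of `joinOfPoints d`. -/
def IsMinNF (d : ℕ) (F : Finset (Fin (d + 1) × Fin d)) : Prop :=
  F ∉ joinOfPoints d ∧ ∀ G ⊂ F, G ∈ joinOfPoints d

/-- The Kneser graph of the family of minimal non-faces: vertices are the
minimal non-faces, adjacent iff disjoint. -/
def minNFKneser (d : ℕ) : SimpleGraph {F : Finset (Fin (d + 1) × Fin d) // IsMinNF d F} where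
  Adj F G := F ≠ G ∧ Disjoint F.1 G.1
  symm := by
    constructor
    rintro F G ⟨h1, h2⟩
    exact ⟨h1.symm, h2.symm⟩
  loopless := by
    constructor
    rintro F ⟨h, _⟩
    exact h rfl

/-!
A non-face has two vertices in one column, and that pair is already a non-face, so the minimal
non-faces are the pairs inside a column. Pairs in different columns are disjoint, so the Kneser
graph is the join of `d` copies of `KG(d + 1, 2)` and needs `d` disjoint palettes of
`χ(KG(d + 1, 2)) = d - 1` colours each.

The bound `χ(KG(n, 2)) ≥ n - 2` goes by induction on `n`: a colour class is a pairwise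
intersecting family of 2-sets, hence either a star, whose centre can be deleted at the cost of one
colour, or contained in a triangle. If no class is a star, `C(n, 2) ≤ 3 · #colours` already
forces `n - 2` colours. Conversely, colouring a pair by its smaller element capped at `n - 3` is
proper.
-/

open Finset SimpleGraph

namespace Nat

lemma sub_two_le_of_choose_two_le {n t : ℕ} (h : n.choose 2 ≤ 3 * t) : n - 2 ≤ t := by
  obtain _ | _ | m := n
  · simp
  · simp
  · have h2 := Nat.add_one_mul_choose_eq (m + 1) 1
    norm_num at h2
    suffices m ≤ t by omega
    nlinarith [sq_nonneg ((m : ℤ) - 2)]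

end Nat

namespace Finset

variable {α β : Type*} [DecidableEq α]

lemma exists_eq_pair_of_mem {E : Finset α} {x : α} (hE : #E = 2) (hx : x ∈ E) :
    ∃ y, x ≠ y ∧ E = {x, y} := by
  obtain ⟨p, q, hpq, rfl⟩ := card_eq_two.1 hE
  rcases mem_insert.1 hx with rfl | hx
  · exact ⟨q, hpq, rfl⟩
  · rw [mem_singleton.1 hx]
    exact ⟨p, hpq.symm, pair_comm _ _⟩

lemma card_le_three_of_intersecting {F : Finset (Finset α)} (hcard : ∀ A ∈ F, #A = 2)
    (hF : (F : Set (Finset α)).Intersecting) (hnc : ∀ x, ∃ A ∈ F, x ∉ A) : #F ≤ 3 := by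
  rcases F.eq_empty_or_nonempty with rfl | ⟨A, hA⟩
  · simp
  obtain ⟨a, b, hab, rfl⟩ := card_eq_two.1 (hcard A hA)
  obtain ⟨B, hB, haB⟩ := hnc a
  have hbB : b ∈ B := by simpa [disjoint_insert_left, haB] using hF hA hB
  obtain ⟨c, hbc, rfl⟩ := exists_eq_pair_of_mem (hcard B hB) hbB
  obtain ⟨D, hD, hbD⟩ := hnc b
  have haD : a ∈ D := by simpa [disjoint_insert_left, hbD] using hF hA hD
  obtain ⟨e, hae, rfl⟩ := exists_eq_pair_of_mem (hcard D hD) haD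
  obtain rfl : c = e := by
    have := hF hB hD
    simp only [mem_insert, mem_singleton, not_or] at haB hbD
    simp only [disjoint_insert_left, disjoint_singleton_left, mem_insert, mem_singleton] at this
    grind
  simp only [mem_insert, mem_singleton, not_or] at haB hbD
  -- a 2-set meeting all three sides of the triangle `abc` lies inside it
  have hsub : F ⊆ powersetCard 2 {a, b, c} := by
    intro E hE
    refine mem_powersetCard.2 ⟨fun x hx => ?_, hcard E hE⟩
    by_contra hx'
    obtain ⟨y, hxy, rfl⟩ := exists_eq_pair_of_mem (hcard E hE) hx
    have h1 := hF hA hE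
    have h2 := hF hB hE
    have h3 := hF hD hE
    simp only [mem_insert, mem_singleton, not_or] at hx'
    simp only [disjoint_insert_left, disjoint_singleton_left, mem_insert, mem_singleton] at h1 h2 h3
    grind
  calc #F ≤ #(powersetCard 2 {a, b, c}) := card_le_card hsub
    _ = 3 := by
      rw [card_powersetCard, card_eq_three.2 ⟨a, b, c, hab, haB.2, hbc, rfl⟩]
      rfl

/-- Kneser's bound `χ(KG(n, 2)) ≥ n - 2`, for colourings with any set of colours. -/
theorem sub_two_le_card_image_powersetCard_two [DecidableEq β] (c : Finset α → β)
    (s : Finset α)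
    (hc : ∀ A ∈ s.powersetCard 2, ∀ B ∈ s.powersetCard 2, Disjoint A B → c A ≠ c B) :
    #s - 2 ≤ #((s.powersetCard 2).image c) := by
  induction s using Finset.strongInduction with
  | H s ih =>
  by_cases hstar :
      ∃ i ∈ (s.powersetCard 2).image c, ∃ x, ∀ A ∈ s.powersetCard 2, c A = i → x ∈ A
  · obtain ⟨i, hi, x, hx⟩ := hstar
    obtain ⟨A, hA, rfl⟩ := mem_image.1 hi
    have hxs : x ∈ s := (mem_powersetCard.1 hA).1 (hx A hA rfl)
    have herase : (s.erase x).powersetCard 2 ⊆ s.powersetCard 2 :=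
      powersetCard_mono (erase_subset _ _)
    have hsub :
        ((s.erase x).powersetCard 2).image c ⊆ ((s.powersetCard 2).image c).erase (c A) := by
      intro k hk
      obtain ⟨B, hB, rfl⟩ := mem_image.1 hk
      refine mem_erase.2 ⟨fun h => ?_, mem_image_of_mem c (herase hB)⟩
      simpa using (mem_powersetCard.1 hB).1 (hx B (herase hB) h)
    have hrec := ih (s.erase x) (erase_ssubset hxs)
      fun A hA B hB => hc A (herase hA) B (herase hB)
    have := card_le_card hsub
    rw [card_erase_of_mem hxs] at hrec
    rw [card_erase_of_mem hi] at this
    have := card_pos.2 ⟨_, hi⟩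
    omega
  · push Not at hstar
    apply Nat.sub_two_le_of_choose_two_le
    rw [← card_powersetCard]
    refine card_le_mul_card_image _ 3 fun i hi => card_le_three_of_intersecting ?_ ?_ fun x => ?_
    · exact fun A hA => (mem_powersetCard.1 (mem_filter.1 hA).1).2
    · intro A hA B hB hAB
      exact hc A (mem_filter.1 hA).1 B (mem_filter.1 hB).1 hAB
        ((mem_filter.1 hA).2.trans (mem_filter.1 hB).2.symm)
    · obtain ⟨A, hA, hcA, hxA⟩ := hstar i hi x
      exact ⟨A, mem_filter.2 ⟨hA, hcA⟩, hxA⟩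

end Finset

section JoinOfPoints

variable {d : ℕ}

lemma mem_joinOfPoints_of_card_le_one {σ : Finset (Fin (d + 1) × Fin d)} (h : #σ ≤ 1) :
    σ ∈ joinOfPoints d :=
  fun _ => (card_filter_le _ _).trans h

lemma pair_notMem_joinOfPoints {j : Fin d} {a b : Fin (d + 1)} (hab : a ≠ b) :
    {(a, j), (b, j)} ∉ joinOfPoints d := by
  intro h
  have := h j
  rw [filter_true_of_mem (by simp), card_pair (by simp [hab])] at this
  omega

theorem isMinNF_iff (d : ℕ) (F : Finset (Fin (d + 1) × Fin d)) :
    IsMinNF d F ↔ ∃ (j : Fin d) (a b : Fin (d + 1)), a ≠ b ∧ F = {(a, j), (b, j)} := by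
  refine ⟨fun ⟨hF, hmin⟩ => ?_, ?_⟩
  · obtain ⟨j, hj⟩ : ∃ j, 1 < #(F.filter (·.2 = j)) := by simpa [joinOfPoints] using hF
    obtain ⟨⟨a, j₁⟩, hp, ⟨b, j₂⟩, hq, hpq⟩ := one_lt_card.1 hj
    obtain ⟨hp, hj₁ : j₁ = j⟩ := mem_filter.1 hp
    obtain ⟨hq, hj₂ : j₂ = j⟩ := mem_filter.1 hq
    subst j₁ j₂
    have hab : a ≠ b := by rintro rfl; exact hpq rfl
    refine ⟨j, a, b, hab, ?_⟩
    have hsub : {(a, j), (b, j)} ⊆ F := insert_subset hp (singleton_subset_iff.2 hq)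
    by_contra hne
    exact pair_notMem_joinOfPoints hab (hmin _ (hsub.ssubset_of_ne (Ne.symm hne)))
  · rintro ⟨j, a, b, hab, rfl⟩
    refine ⟨pair_notMem_joinOfPoints hab, fun G hG => mem_joinOfPoints_of_card_le_one ?_⟩
    have := card_lt_card hG
    rw [card_pair (by simp [hab])] at this
    omega

lemma IsMinNF.nonempty {F : Finset (Fin (d + 1) × Fin d)} (hF : IsMinNF d F) : F.Nonempty :=
  nonempty_iff_ne_empty.2 fun h => hF.1 (h ▸ mem_joinOfPoints_of_card_le_one (by simp))

lemma minNFKneser_adj_iff {v w : {F // IsMinNF d F}} :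
    (minNFKneser d).Adj v w ↔ Disjoint v.1 w.1 := by
  refine ⟨And.right, fun h => ⟨?_, h⟩⟩
  rintro rfl
  exact v.2.nonempty.ne_empty (disjoint_self_iff_empty _ |>.1 h)

lemma isMinNF_image_pair {j : Fin d} {A : Finset (Fin (d + 1))} (hA : #A = 2) :
    IsMinNF d (A.image (·, j)) := by
  obtain ⟨a, b, hab, rfl⟩ := card_eq_two.1 hA
  exact (isMinNF_iff d _).2 ⟨j, a, b, hab, by simp [image_insert]⟩

/-- The vertex `A × {j}` for a pair `A`; other sets `A` are sent to an arbitrary vertex. -/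
noncomputable def columnVertex (j : Fin d) (A : Finset (Fin (d + 1))) : {F // IsMinNF d F} :=
  if hA : #A = 2 then ⟨A.image (·, j), isMinNF_image_pair hA⟩
  else ⟨{(j.castSucc, j), (Fin.last d, j)},
    (isMinNF_iff d _).2 ⟨j, _, _, (Fin.castSucc_lt_last j).ne, rfl⟩⟩

lemma columnVertex_adj {j j' : Fin d} {A B : Finset (Fin (d + 1))} (hA : #A = 2) (hB : #B = 2)
    (h : j ≠ j' ∨ Disjoint A B) :
    (minNFKneser d).Adj (columnVertex j A) (columnVertex j' B) := by
  rw [minNFKneser_adj_iff, columnVertex, columnVertex, dif_pos hA, dif_pos hB, Finset.disjoint_left]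
  simp only [mem_image, not_exists, not_and]
  rintro _ ⟨a, ha, rfl⟩ b hb hba
  obtain ⟨rfl, rfl⟩ := Prod.ext_iff.1 hba
  exact h.elim (· rfl) fun h => Finset.disjoint_left.1 h ha hb

theorem mul_sub_one_le_of_coloring {m : ℕ} (C : (minNFKneser d).Coloring (Fin m)) :
    d * (d - 1) ≤ m := by
  let T : Fin d → Finset (Fin m) := fun j => (univ.powersetCard 2).image (C ∘ columnVertex j)
  have hT : ∀ j, d - 1 ≤ #(T j) := fun j => by
    simpa using sub_two_le_card_image_powersetCard_two (C ∘ columnVertex j) univ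
      fun A hA B hB hAB =>
        C.valid (columnVertex_adj (mem_powersetCard.1 hA).2 (mem_powersetCard.1 hB).2 (.inr hAB))
  have hdisj : ((univ : Finset (Fin d)) : Set (Fin d)).PairwiseDisjoint T := by
    intro j _ j' _ hjj'
    simp only [Function.onFun, Finset.disjoint_left, T, mem_image, mem_powersetCard, not_exists,
      not_and]
    rintro _ ⟨A, hA, rfl⟩ B hB hAB
    exact C.valid (columnVertex_adj hA.2 hB.2 (.inl hjj')) hAB.symm
  calc d * (d - 1) = ∑ _j : Fin d, (d - 1) := by simp
    _ ≤ ∑ j, #(T j) := sum_le_sum fun j _ => hT j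
    _ = #(univ.biUnion T) := (card_biUnion hdisj).symm
    _ ≤ m := (card_le_univ _).trans_eq (Fintype.card_fin m)

theorem minNFKneser_colorable (hd : 2 ≤ d) : (minNFKneser d).Colorable (d * (d - 1)) := by
  choose j a b hab hv using fun v : {F // IsMinNF d F} => (isMinNF_iff d v.1).1 v.2
  -- within a column only three points are `≥ d - 2`, too few for two disjoint pairs
  let C : (minNFKneser d).Coloring (Fin d × Fin (d - 1)) :=
    Coloring.mk (fun v => (j v, ⟨min (min (a v : ℕ) (b v)) (d - 2), by omega⟩))
      fun {v w} hvw hc => by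
        rw [minNFKneser_adj_iff, hv v, hv w] at hvw
        simp only [Prod.mk.injEq, Fin.mk.injEq] at hc
        obtain ⟨hj, hmin⟩ := hc
        simp only [disjoint_insert_left, disjoint_singleton_left, mem_insert, mem_singleton,
          Prod.mk.injEq, hj, and_true, not_or] at hvw
        have := hab v
        have := hab w
        simp only [Fin.ext_iff] at *
        omega
  simpa using C.colorable

end JoinOfPoints

/-- The minimal non-faces of the `d`-fold join of `d + 1` points are exactly
the pairs `{(a, j), (b, j)}` with `a ≠ b`, and the Kneser graph of the minimal
non-faces has chromatic number `d * (d - 1)`. -/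
theorem minNF_and_chromaticNumber (d : ℕ) (hd : 2 ≤ d) :
    (∀ F : Finset (Fin (d + 1) × Fin d),
      IsMinNF d F ↔ ∃ (j : Fin d) (a b : Fin (d + 1)), a ≠ b ∧ F = {(a, j), (b, j)}) ∧
    (minNFKneser d).chromaticNumber = (d * (d - 1) : ℕ) :=
  ⟨isMinNF_iff d, le_antisymm (minNFKneser_colorable hd).chromaticNumber_le <|
    le_chromaticNumber_iff_coloring.2 fun _ C => by exact_mod_cast mul_sub_one_le_of_coloring C⟩
end

section
/- Let P ⊂ R^n be a full-dimensional polytope with 0 in its interior, F a proper face, and π: R^n → R^d a surjective linear map with dual setup as in the Projection Lemma. Then F is strictly preserved under π (π(F) is a face of π(P), combinatorially isomorphic to F, and π^{-1}(π(F)) ∩ P = F) if and only if 0 lies in the interior of q*(F^◇). -/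
/-!
Everything is read off exposing functionals. `π(F)` is an exposed face of `π(P)` with
`π⁻¹(π(F)) ∩ P = F` exactly when `F` is exposed by a functional that factors through `π`, that is
(rescaling, as `0 ∈ int P`) by some `ℓ ∈ F^◇` killing `ker π = im q`, i.e. with `q* ℓ = 0`.

If `0` is interior to `q*(F^◇)`, adding to any `ℓ₁ ∈ F^◇` exposing `F` an element of `F^◇` whose
`q*`-image is a negative multiple of `q* ℓ₁` gives such a functional; and `π` is injective on `F`
because for `x, y ∈ F` with `x - y = q w`, every element of `q*(F^◇)` is orthogonal to `w`.

Conversely, let `ℓ ∈ F^◇` expose `F` with `q* ℓ = 0`, and let `T` be the points of `S` lying in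
`F`, so `F = conv T`. Injectivity of `π` on `conv T` means that `im q` contains no nonzero
combination of `T` with coefficient sum `0`, and `ℓ` forces every combination of `T` in `im q` to
have coefficient sum `0`; dually, `q*` maps the functionals vanishing on `T` onto. Perturbing `ℓ`
by small such functionals stays in `F^◇`, which fills a neighbourhood of `0 = q* ℓ`.
-/

theorem isExposed_image_and_preimage_iff {E G : Type*} [AddCommGroup G] [Module ℝ G]
    [TopologicalSpace G] {P F : Set E} (π : E → G) (hF : F.Nonempty) :
    IsExposed ℝ (π '' P) (π '' F) ∧ π ⁻¹' (π '' F) ∩ P = F ↔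
      ∃ c : StrongDual ℝ G, F = {x ∈ P | ∀ y ∈ P, c (π y) ≤ c (π x)} := by
  constructor
  · rintro ⟨hexp, hpre⟩
    obtain ⟨c, hc⟩ := hexp (hF.image π)
    refine ⟨c, ?_⟩
    rw [← hpre, hc]
    ext x
    simp only [Set.mem_inter_iff, Set.mem_preimage, Set.mem_ofPred_eq, Set.forall_mem_image]
    exact ⟨fun h => ⟨h.2, h.1.2⟩, fun h => ⟨⟨Set.mem_image_of_mem π h.1, h.2⟩, h.1⟩⟩
  · rintro ⟨c, rfl⟩
    have himage : π '' {x ∈ P | ∀ y ∈ P, c (π y) ≤ c (π x)} = c.toExposed (π '' P) := by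
      ext z
      simp only [ContinuousLinearMap.toExposed, Set.mem_image, Set.mem_ofPred_eq]
      grind
    refine ⟨himage ▸ ContinuousLinearMap.toExposed.isExposed, ?_⟩
    rw [himage]
    ext x
    simp only [ContinuousLinearMap.toExposed, Set.mem_inter_iff, Set.mem_preimage,
      Set.mem_ofPred_eq, Set.forall_mem_image]
    grind

section ConvexHull

variable {E : Type*} [AddCommGroup E] [Module ℝ E]

theorem Finset.sep_convexHull_eq_convexHull_filter (l : E →ₗ[ℝ] ℝ) (S : Finset E)
    (hl : ∀ s ∈ S, l s ≤ 1) :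
    {x ∈ convexHull ℝ (S : Set E) | l x = 1} = convexHull ℝ ↑(S.filter (l · = 1)) := by
  apply subset_antisymm
  · rintro x ⟨hx, hlx⟩
    obtain ⟨w, hw₀, hw₁, rfl⟩ := Finset.mem_convexHull'.mp hx
    -- the weights sum to `1` and average `l` to `1`, so they vanish where `l < 1`
    have hdefect : ∑ s ∈ S, w s * (1 - l s) = 0 := by
      simp only [map_sum, map_smul, smul_eq_mul] at hlx
      simp only [mul_sub, mul_one, Finset.sum_sub_distrib, hw₁, hlx, sub_self]
    have hsupp : ∀ s ∈ S, w s ≠ 0 → l s = 1 := fun s hs hws => by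
      have := (Finset.sum_eq_zero_iff_of_nonneg fun s hs =>
        mul_nonneg (hw₀ s hs) (sub_nonneg.mpr (hl s hs))).mp hdefect s hs
      linarith [(mul_eq_zero.mp this).resolve_left hws]
    refine Finset.mem_convexHull'.mpr ⟨w, fun s hs => hw₀ s (Finset.mem_filter.mp hs).1, ?_, ?_⟩
    · rwa [Finset.sum_filter_of_ne hsupp]
    · exact Finset.sum_filter_of_ne fun s hs hws => hsupp s hs (left_ne_zero_of_smul hws)
  · refine convexHull_min (fun s hs => ?_) ((convex_convexHull ℝ _).inter
      (convex_hyperplane l.isLinear 1))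
    obtain ⟨hsS, hls⟩ := Finset.mem_filter.mp hs
    exact ⟨subset_convexHull ℝ _ hsS, hls⟩

theorem Finset.sum_smul_eq_zero_of_injOn_convexHull {G : Type*} [AddCommGroup G] [Module ℝ G]
    (π : E →ₗ[ℝ] G) {T : Finset E} (hinj : Set.InjOn π (convexHull ℝ ↑T)) {c : E → ℝ}
    (hc : ∑ s ∈ T, c s = 0) (hπc : π (∑ s ∈ T, c s • s) = 0) :
    ∑ s ∈ T, c s • s = 0 := by
  -- split `c` into two nonnegative weight vectors of equal mass `μ`
  set μ := ∑ s ∈ T, (c s)⁺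
  have hμ : ∑ s ∈ T, (c s)⁻ = μ := by
    have : μ - ∑ s ∈ T, (c s)⁻ = 0 := by
      rw [← Finset.sum_sub_distrib]
      simpa only [posPart_sub_negPart] using hc
    linarith
  have hsplit : ∑ s ∈ T, c s • s = ∑ s ∈ T, (c s)⁺ • s - ∑ s ∈ T, (c s)⁻ • s := by
    simp only [← Finset.sum_sub_distrib, ← sub_smul, posPart_sub_negPart]
  rcases (Finset.sum_nonneg fun s _ => posPart_nonneg (c s)).eq_or_lt with hμ0 | hμpos
  · have hpos := (Finset.sum_eq_zero_iff_of_nonneg fun s _ => posPart_nonneg (c s)).mp hμ0.symm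
    have hneg := (Finset.sum_eq_zero_iff_of_nonneg fun s _ => negPart_nonneg (c s)).mp
      (hμ.trans hμ0.symm)
    exact Finset.sum_eq_zero fun s hs => by
      rw [← posPart_sub_negPart (c s), hpos s hs, hneg s hs, sub_zero, zero_smul]
  · have hmem : ∀ w : E → ℝ, (∀ s, 0 ≤ w s) → ∑ s ∈ T, w s = μ →
        μ⁻¹ • ∑ s ∈ T, w s • s ∈ convexHull ℝ (T : Set E) := fun w hw hwμ => by
      simpa [Finset.centerMass, hwμ] using
        T.centerMass_mem_convexHull (fun s _ => hw s) (hwμ ▸ hμpos) (z := id) (fun s hs => hs)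
    have heq := hinj (hmem _ (fun s => posPart_nonneg (c s)) rfl)
      (hmem _ (fun s => negPart_nonneg (c s)) hμ)
      (by rw [map_smul, map_smul, ← sub_eq_zero, ← smul_sub, ← map_sub, ← hsplit, hπc, smul_zero])
    rw [hsplit, ← smul_right_injective E (inv_ne_zero hμpos.ne') |>.eq_iff, smul_sub, heq,
      sub_self, smul_zero]

end ConvexHull

theorem exists_pos_smul_mem_of_zero_mem_interior {E : Type*} [AddCommGroup E] [Module ℝ E]
    [TopologicalSpace E] [ContinuousSMul ℝ E] {K : Set E} (hK : (0 : E) ∈ interior K) (v : E) :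
    ∃ t : ℝ, 0 < t ∧ t • v ∈ K := by
  have hsmall : ∀ᶠ t in nhdsWithin (0 : ℝ) (Set.Ioi 0), t • v ∈ K :=
    ((continuous_id.smul continuous_const).tendsto' 0 0 (zero_smul ℝ v)).mono_left
      nhdsWithin_le_nhds (mem_interior_iff_mem_nhds.mp hK)
  obtain ⟨t, htK, ht⟩ := (hsmall.and self_mem_nhdsWithin).exists
  exact ⟨t, ht, htK⟩

section DotProduct

variable {m k : ℕ}

theorem exists_dotProduct_eq (f : (Fin m → ℝ) →ₗ[ℝ] ℝ) : ∃ u : Fin m → ℝ, ∀ x, f x = u ⬝ᵥ x :=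
  ⟨(dotProductEquiv ℝ (Fin m)).symm f, fun x => by
    rw [← dotProductEquiv_apply_apply, LinearEquiv.apply_symm_apply]⟩

theorem eq_zero_of_forall_dotProduct_nonpos {K : Set (Fin m → ℝ)}
    (hK : (0 : Fin m → ℝ) ∈ interior K) {w : Fin m → ℝ} (hw : ∀ z ∈ K, z ⬝ᵥ w ≤ 0) : w = 0 := by
  obtain ⟨t, ht, htw⟩ := exists_pos_smul_mem_of_zero_mem_interior hK w
  have hww : w ⬝ᵥ w ≤ 0 := by
    have := hw _ htw
    rw [smul_dotProduct, smul_eq_mul] at this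
    exact nonpos_of_mul_nonpos_right this ht
  exact dotProduct_self_eq_zero.mp (le_antisymm hww (by simpa using dotProduct_self_star_nonneg w))

theorem exists_dotProduct_ne_zero_of_notMem {V : Submodule ℝ (Fin m → ℝ)} {x : Fin m → ℝ}
    (hx : x ∉ V) : ∃ w : Fin m → ℝ, (∀ v ∈ V, w ⬝ᵥ v = 0) ∧ w ⬝ᵥ x ≠ 0 := by
  obtain ⟨f, hfx, hVf⟩ := Submodule.exists_le_ker_of_notMem hx
  obtain ⟨w, hw⟩ := exists_dotProduct_eq f
  exact ⟨w, fun v hv => hw v ▸ hVf hv, hw x ▸ hfx⟩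

theorem exists_section_orthogonal_of_transpose {q : (Fin k → ℝ) →ₗ[ℝ] (Fin m → ℝ)}
    {qs : (Fin m → ℝ) →ₗ[ℝ] (Fin k → ℝ)} (hqs : ∀ v w, qs v ⬝ᵥ w = v ⬝ᵥ q w)
    {V : Submodule ℝ (Fin m → ℝ)} (hV : ∀ w, q w ∈ V → w = 0) :
    ∃ j : (Fin k → ℝ) →ₗ[ℝ] (Fin m → ℝ), (∀ z, ∀ v ∈ V, j z ⬝ᵥ v = 0) ∧ ∀ z, qs (j z) = z := by
  let W := V.orthogonalBilin (dotProductBilin ℝ ℝ)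
  have hW : ∀ h, h ∈ W ↔ ∀ v ∈ V, h ⬝ᵥ v = 0 := fun h => by
    simp only [W, Submodule.mem_orthogonalBilin_iff, dotProductBilin_apply_apply, dotProduct_comm]
  have honto : W.map qs = ⊤ := by
    refine Submodule.eq_top_iff'.mpr fun z => by_contra fun hz => ?_
    obtain ⟨w, hwW, hwz⟩ := exists_dotProduct_ne_zero_of_notMem hz
    have hqw : q w ∈ V := by_contra fun hqw => by
      obtain ⟨h, hhV, hhw⟩ := exists_dotProduct_ne_zero_of_notMem hqw
      rw [← hqs, dotProduct_comm] at hhw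
      exact hhw (hwW _ (Submodule.mem_map_of_mem ((hW h).mpr hhV)))
    exact hwz (by rw [hV w hqw, zero_dotProduct])
  obtain ⟨σ, hσ⟩ := (qs ∘ₗ W.subtype).exists_rightInverse_of_surjective
    (by rw [LinearMap.range_comp, Submodule.range_subtype, honto])
  exact ⟨W.subtype ∘ₗ σ, fun z => (hW _).mp (σ z).2, fun z => LinearMap.congr_fun hσ z⟩

end DotProduct

/-- The face `F^◇` of the polar `P^Δ` dual to `F`. -/
def dualFace {n : ℕ} (P F : Set (Fin n → ℝ)) : Set (Fin n → ℝ) :=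
  {ℓ | (∀ x ∈ P, ℓ ⬝ᵥ x ≤ 1) ∧ ∀ x ∈ F, ℓ ⬝ᵥ x = 1}

section Projection

variable {n d k : ℕ} {P F : Set (Fin n → ℝ)} {π : (Fin n → ℝ) →ₗ[ℝ] (Fin d → ℝ)}
  {q : (Fin k → ℝ) →ₗ[ℝ] (Fin n → ℝ)} {qs : (Fin n → ℝ) →ₗ[ℝ] (Fin k → ℝ)}

theorem transpose_eq_zero_iff (hexact : LinearMap.range q = LinearMap.ker π)
    (hqs : ∀ v w, qs v ⬝ᵥ w = v ⬝ᵥ q w) {u : Fin n → ℝ} :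
    qs u = 0 ↔ ∀ v, π v = 0 → u ⬝ᵥ v = 0 := by
  rw [← dotProduct_eq_zero_iff]
  simp only [hqs]
  refine ⟨fun h v hv => ?_, fun h w => h _ ?_⟩
  · obtain ⟨w, rfl⟩ : v ∈ LinearMap.range q := hexact ▸ hv
    exact h w
  · exact (hexact ▸ LinearMap.mem_range_self q w :)

theorem exists_comp_eq_dotProduct (hπ : Function.Surjective π) {u : Fin n → ℝ}
    (hu : ∀ v, π v = 0 → u ⬝ᵥ v = 0) :
    ∃ c : StrongDual ℝ (Fin d → ℝ), ∀ x, c (π x) = u ⬝ᵥ x := by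
  obtain ⟨σ, hσ⟩ := π.exists_rightInverse_of_surjective (LinearMap.range_eq_top.mpr hπ)
  refine ⟨LinearMap.toContinuousLinearMap (dotProductEquiv ℝ (Fin n) u ∘ₗ σ), fun x => ?_⟩
  have hker := hu (σ (π x) - x) (by rw [map_sub, sub_eq_zero]; exact LinearMap.congr_fun hσ (π x))
  rw [dotProduct_sub, sub_eq_zero] at hker
  simpa using hker

theorem exists_smul_mem_dualFace (h0 : (0 : Fin n → ℝ) ∈ interior P) (hFne : F.Nonempty)
    (hFP : F ≠ P) {u : Fin n → ℝ} (hu : F = {x ∈ P | ∀ y ∈ P, u ⬝ᵥ y ≤ u ⬝ᵥ x}) :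
    ∃ t : ℝ, t • u ∈ dualFace P F ∧ ∀ x ∈ P, (t • u) ⬝ᵥ x = 1 → x ∈ F := by
  obtain ⟨f₀, hf₀⟩ := hFne
  set α := u ⬝ᵥ f₀
  have hmax : ∀ y ∈ P, u ⬝ᵥ y ≤ α := (hu ▸ hf₀ :).2
  have hmemF : ∀ x ∈ P, x ∈ F ↔ u ⬝ᵥ x = α := fun x hx => by
    rw [hu]
    exact ⟨fun h => le_antisymm (hmax x hx) (h.2 f₀ (hu ▸ hf₀ :).1),
      fun h => ⟨hx, fun y hy => h ▸ hmax y hy⟩⟩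
  have hu0 : u ≠ 0 := by
    rintro rfl
    exact hFP (hu.trans (by simp))
  -- `0` is interior, so `P` contains a positive multiple of `u`, on which `u` is positive
  have hα : 0 < α := by
    obtain ⟨t, ht, htu⟩ := exists_pos_smul_mem_of_zero_mem_interior h0 u
    have huu : 0 < u ⬝ᵥ u := lt_of_le_of_ne (by simpa using dotProduct_self_star_nonneg u)
      (Ne.symm (mt dotProduct_self_eq_zero.mp hu0))
    have := hmax _ htu
    rw [dotProduct_smul, smul_eq_mul] at this
    nlinarith
  have hdot : ∀ x, (α⁻¹ • u) ⬝ᵥ x = u ⬝ᵥ x / α := fun x => by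
    rw [smul_dotProduct, smul_eq_mul, inv_mul_eq_div]
  refine ⟨α⁻¹, ⟨fun x hx => ?_, fun x hx => ?_⟩, fun x hx h1 => ?_⟩
  · rw [hdot, div_le_one hα]; exact hmax x hx
  · rw [hdot, div_eq_one_iff_eq hα.ne']; exact (hmemF x (hu ▸ hx :).1).mp hx
  · rw [hdot, div_eq_one_iff_eq hα.ne'] at h1; exact (hmemF x hx).mpr h1

theorem eq_convexHull_filter_of_mem_dualFace {S : Finset (Fin n → ℝ)}
    (hP : P = convexHull ℝ ↑S) (hFP : F ⊆ P) {ℓ : Fin n → ℝ} (hℓ : ℓ ∈ dualFace P F)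
    (hℓF : ∀ x ∈ P, ℓ ⬝ᵥ x = 1 → x ∈ F) : F = convexHull ℝ ↑(S.filter (ℓ ⬝ᵥ · = 1)) := by
  have hface := Finset.sep_convexHull_eq_convexHull_filter (dotProductEquiv ℝ (Fin n) ℓ) S
    fun s hs => hℓ.1 s (hP ▸ subset_convexHull ℝ _ hs)
  simp only [dotProductEquiv_apply_apply] at hface
  rw [← hface, ← hP]
  ext x
  exact ⟨fun hx => ⟨hFP hx, hℓ.2 x hx⟩, fun hx => hℓF x hx.1 hx.2⟩

theorem injOn_of_zero_mem_interior_dualFace (hexact : LinearMap.range q = LinearMap.ker π)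
    (hqs : ∀ v w, qs v ⬝ᵥ w = v ⬝ᵥ q w) (h : (0 : Fin k → ℝ) ∈ interior (qs '' dualFace P F)) :
    Set.InjOn π F := by
  intro x hx y hy hxy
  obtain ⟨w, hw⟩ : x - y ∈ LinearMap.range q := by
    rw [hexact, LinearMap.mem_ker, map_sub, hxy, sub_self]
  -- every `ℓ ∈ F^◇` takes the value `1` at both `x` and `y`
  have hw0 : w = 0 := eq_zero_of_forall_dotProduct_nonpos h <| by
    rintro _ ⟨ℓ, hℓ, rfl⟩
    rw [hqs, hw, dotProduct_sub, hℓ.2 x hx, hℓ.2 y hy, sub_self]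
  rwa [hw0, map_zero, eq_comm, sub_eq_zero] at hw

theorem exists_exposing_of_zero_mem_interior_dualFace (hFP : F ⊆ P) (hFne : F.Nonempty)
    {ℓ : Fin n → ℝ} (hℓ : ℓ ∈ dualFace P F) (hℓF : ∀ x ∈ P, ℓ ⬝ᵥ x = 1 → x ∈ F)
    (h : (0 : Fin k → ℝ) ∈ interior (qs '' dualFace P F)) :
    ∃ u : Fin n → ℝ, qs u = 0 ∧ F = {x ∈ P | ∀ y ∈ P, u ⬝ᵥ y ≤ u ⬝ᵥ x} := by
  obtain ⟨t, ht, g, hg, hgℓ⟩ := exists_pos_smul_mem_of_zero_mem_interior h (-qs ℓ)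
  obtain ⟨f₀, hf₀⟩ := hFne
  have hdot : ∀ x, (g + t • ℓ) ⬝ᵥ x = g ⬝ᵥ x + t * ℓ ⬝ᵥ x := fun x => by
    rw [add_dotProduct, smul_dotProduct, smul_eq_mul]
  refine ⟨g + t • ℓ, by rw [map_add, map_smul, hgℓ, smul_neg, neg_add_cancel], ?_⟩
  ext x
  refine ⟨fun hx => ⟨hFP hx, fun y hy => ?_⟩, fun ⟨hx, hmax⟩ => hℓF x hx ?_⟩
  · rw [hdot, hdot, hg.2 x hx, hℓ.2 x hx]
    nlinarith [hg.1 y hy, hℓ.1 y hy]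
  · have := hmax f₀ (hFP hf₀)
    rw [hdot, hdot, hg.2 f₀ hf₀, hℓ.2 f₀ hf₀] at this
    nlinarith [hg.1 x hx, hℓ.1 x hx]

theorem eq_zero_of_mem_span_of_injOn_convexHull (hq : Function.Injective q)
    (hqπ : LinearMap.range q ≤ LinearMap.ker π) (hqs : ∀ v w, qs v ⬝ᵥ w = v ⬝ᵥ q w)
    {T : Finset (Fin n → ℝ)} {ℓ : Fin n → ℝ} (hℓT : ∀ s ∈ T, ℓ ⬝ᵥ s = 1) (hℓ : qs ℓ = 0)
    (hinj : Set.InjOn π (convexHull ℝ ↑T)) {w : Fin k → ℝ}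
    (hw : q w ∈ Submodule.span ℝ (T : Set (Fin n → ℝ))) : w = 0 := by
  obtain ⟨c, -, hc⟩ := Submodule.mem_span_finset.mp hw
  have hcsum : ∑ s ∈ T, c s = 0 := by
    have hℓq : ℓ ⬝ᵥ q w = 0 := by rw [← hqs, hℓ, zero_dotProduct]
    rwa [← hc, dotProduct_sum, Finset.sum_congr rfl fun s hs => by
      rw [dotProduct_smul, smul_eq_mul, hℓT s hs, mul_one]] at hℓq
  apply hq
  rw [map_zero, ← hc]
  exact Finset.sum_smul_eq_zero_of_injOn_convexHull π hinj hcsum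
    (hc ▸ hqπ (LinearMap.mem_range_self q w))

theorem zero_mem_interior_dualFace_of_injOn (hq : Function.Injective q)
    (hqπ : LinearMap.range q ≤ LinearMap.ker π) (hqs : ∀ v w, qs v ⬝ᵥ w = v ⬝ᵥ q w)
    (S : Finset (Fin n → ℝ)) {ℓ : Fin n → ℝ} (hℓS : ∀ s ∈ S, ℓ ⬝ᵥ s ≤ 1) (hℓ : qs ℓ = 0)
    (hinj : Set.InjOn π (convexHull ℝ ↑(S.filter (ℓ ⬝ᵥ · = 1)))) :
    (0 : Fin k → ℝ) ∈ interior
      (qs '' dualFace (convexHull ℝ ↑S) (convexHull ℝ ↑(S.filter (ℓ ⬝ᵥ · = 1)))) := by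
  set T := S.filter (ℓ ⬝ᵥ · = 1)
  obtain ⟨j, hjT, hqsj⟩ := exists_section_orthogonal_of_transpose hqs fun w =>
    eq_zero_of_mem_span_of_injOn_convexHull hq hqπ hqs (fun s hs => (Finset.mem_filter.mp hs).2)
      hℓ hinj
  have hjT' : ∀ z, ∀ s ∈ T, j z ⬝ᵥ s = 0 := fun z s hs =>
    hjT z s (Submodule.subset_span (Finset.mem_coe.mpr hs))
  -- near `0`, `ℓ + j z` stays below `1` at the points of `S` outside `T`
  let O := ⋂ s ∈ S \ T, {z : Fin k → ℝ | (ℓ + j z) ⬝ᵥ s < 1}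
  have hO : IsOpen O := isOpen_biInter_finset fun s _ => isOpen_lt
    ((continuous_const.add j.continuous_of_finiteDimensional).dotProduct continuous_const)
    continuous_const
  have h0O : (0 : Fin k → ℝ) ∈ O := Set.mem_iInter₂.mpr fun s hs => by
    obtain ⟨hsS, hsT⟩ := Finset.mem_sdiff.mp hs
    rw [Set.mem_ofPred_eq, map_zero, add_zero]
    exact lt_of_le_of_ne (hℓS s hsS) fun h => hsT (Finset.mem_filter.mpr ⟨hsS, h⟩)
  refine mem_interior.mpr ⟨O, fun z hz => ⟨ℓ + j z, ⟨?_, ?_⟩, by rw [map_add, hℓ, hqsj, zero_add]⟩,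
    hO, h0O⟩
  · refine convexHull_min (t := {x | (ℓ + j z) ⬝ᵥ x ≤ 1}) (fun s hs => ?_)
      (convex_halfSpace_le (dotProductBilin ℝ ℝ _).isLinear 1)
    by_cases hsT : s ∈ T
    · rw [Set.mem_ofPred_eq, add_dotProduct, hjT' z s hsT, (Finset.mem_filter.mp hsT).2, add_zero]
    · exact (show (ℓ + j z) ⬝ᵥ s < 1 from
        Set.mem_iInter₂.mp hz s (Finset.mem_sdiff.mpr ⟨hs, hsT⟩)).le
  · refine convexHull_min (t := {x | (ℓ + j z) ⬝ᵥ x = 1}) (fun s hs => ?_)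
      (convex_hyperplane (dotProductBilin ℝ ℝ _).isLinear 1)
    rw [Set.mem_ofPred_eq, add_dotProduct, hjT' z s hs, (Finset.mem_filter.mp hs).2, add_zero]

end Projection

/-- Projection Lemma. Let `P ⊂ ℝ^n` be a full-dimensional polytope with `0` in
its interior, `π : ℝ^n → ℝ^d` a surjective linear map, `q : ℝ^{n-d} → ℝ^n` an
injection with image `ker π`, and `qs` the dual map of `q` (functionals being
represented by vectors via the dot product pairing). A proper face `F` of `P`
is strictly preserved under `π` — i.e. `π(F)` is a face of `π(P)`, `π` is
injective on `F` (so that `π(F)` is combinatorially isomorphic to `F`), and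
`π⁻¹(π(F)) ∩ P = F` — if and only if `0` lies in the interior of `qs(F^◇)`,
where `F^◇ = {ℓ ∈ P^Δ : ℓ(x) = 1 ∀ x ∈ F}` is the dual face. -/
theorem projection_lemma (n d : ℕ) (S : Finset (Fin n → ℝ))
    (P F : Set (Fin n → ℝ))
    (hP : P = convexHull ℝ (S : Set (Fin n → ℝ)))
    (h0 : (0 : Fin n → ℝ) ∈ interior P)
    (π : (Fin n → ℝ) →ₗ[ℝ] (Fin d → ℝ)) (hπ : Function.Surjective π)
    (q : (Fin (n - d) → ℝ) →ₗ[ℝ] (Fin n → ℝ)) (hq : Function.Injective q)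
    (hexact : LinearMap.range q = LinearMap.ker π)
    (qs : (Fin n → ℝ) →ₗ[ℝ] (Fin (n - d) → ℝ))
    (hqs : ∀ (v : Fin n → ℝ) (w : Fin (n - d) → ℝ), qs v ⬝ᵥ w = v ⬝ᵥ q w)
    (hF : IsExposed ℝ P F) (hFne : F.Nonempty) (hFproper : F ≠ P) :
    (IsExposed ℝ (π '' P) (π '' F) ∧ Set.InjOn π F ∧ π ⁻¹' (π '' F) ∩ P = F) ↔
      (0 : Fin (n - d) → ℝ) ∈ interior
        (qs '' {ℓ : Fin n → ℝ | (∀ x ∈ P, ℓ ⬝ᵥ x ≤ 1) ∧ ∀ x ∈ F, ℓ ⬝ᵥ x = 1}) := by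
  have hFP : F ⊆ P := hF.subset
  rw [and_left_comm, isExposed_image_and_preimage_iff π hFne]
  constructor
  · rintro ⟨hinj, c, hc⟩
    obtain ⟨u, hu⟩ := exists_dotProduct_eq ((c : (Fin d → ℝ) →ₗ[ℝ] ℝ) ∘ₗ π)
    simp only [LinearMap.comp_apply, ContinuousLinearMap.coe_coe] at hu
    simp only [hu] at hc
    obtain ⟨t, hℓ, hℓF⟩ := exists_smul_mem_dualFace h0 hFne hFproper hc
    have hqsℓ : qs (t • u) = 0 := by
      rw [map_smul, (transpose_eq_zero_iff hexact hqs).mpr fun v hv => by rw [← hu, hv, map_zero],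
        smul_zero]
    obtain rfl := eq_convexHull_filter_of_mem_dualFace hP hFP hℓ hℓF
    subst hP
    exact zero_mem_interior_dualFace_of_injOn hq hexact.le hqs S
      (fun s hs => hℓ.1 s (subset_convexHull ℝ _ hs)) hqsℓ hinj
  · intro h
    obtain ⟨l, hl⟩ := hF hFne
    obtain ⟨u, hu⟩ := exists_dotProduct_eq (l : (Fin n → ℝ) →ₗ[ℝ] ℝ)
    simp only [ContinuousLinearMap.coe_coe] at hu
    simp only [hu] at hl
    obtain ⟨t, hℓ, hℓF⟩ := exists_smul_mem_dualFace h0 hFne hFproper hl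
    obtain ⟨u', hqsu', hu'⟩ := exists_exposing_of_zero_mem_interior_dualFace hFP hFne hℓ hℓF h
    obtain ⟨c, hc⟩ := exists_comp_eq_dotProduct hπ ((transpose_eq_zero_iff hexact hqs).mp hqsu')
    simp only [← hc] at hu'
    exact ⟨injOn_of_zero_mem_interior_dualFace hexact hqs h, c, hu'⟩
end
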